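/- arXiv:1708.00254 — 11 statements merged into one kernel-verified Lean document; each statement's English description precedes it below -/
import Mathlib

section
/- Let X be a metric space, M a median metric space, and φ : X → M an isometric embedding such that every point of M lies within distance D of the image φ(X) (for some constant D ≥ 0). Then X is 2D-tripodal: for every triple of points x, y, z in X there exists a point m in X that is 2D-between x and y, 2D-between y and z, and 2D-between x and z. -/
/-- If `φ : X → M` is an isometric embedding into a median metric
space `M` whose image is `D`-coarsely dense, then `X` is `2D`-tripodal. -/
theorem stmt_0 {X M : Type*} [MetricSpace X] [MetricSpace M]
    (hmedian : ∀ a b c : M, ∃! m : M,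
      dist a m + dist m b = dist a b ∧
      dist b m + dist m c = dist b c ∧
      dist a m + dist m c = dist a c)
    (φ : X → M) (hiso : ∀ x y : X, dist (φ x) (φ y) = dist x y)
    (D : ℝ) (hD : 0 ≤ D)
    (hcoarse : ∀ p : M, ∃ x : X, dist p (φ x) ≤ D) :
    ∀ x y z : X, ∃ m : X,
      dist x m + dist m y ≤ dist x y + 2 * D ∧
      dist y m + dist m z ≤ dist y z + 2 * D ∧
      dist x m + dist m z ≤ dist x z + 2 * D := by
  intro x y z
  obtain ⟨p, ⟨h1, h2, h3⟩, -⟩ := hmedian (φ x) (φ y) (φ z)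
  obtain ⟨m, hm⟩ := hcoarse p
  refine ⟨m, ?_, ?_, ?_⟩
  · calc dist x m + dist m y = dist (φ x) (φ m) + dist (φ m) (φ y) := by
          rw [hiso, hiso]
      _ ≤ (dist (φ x) p + dist p (φ m)) + (dist (φ m) p + dist p (φ y)) := by
          gcongr <;> exact dist_triangle _ _ _
      _ ≤ dist (φ x) (φ y) + 2 * D := by
          rw [dist_comm (φ m) p] at *; linarith [hm]
      _ = dist x y + 2 * D := by rw [hiso]
  · calc dist y m + dist m z = dist (φ y) (φ m) + dist (φ m) (φ z) := by
          rw [hiso, hiso]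
      _ ≤ (dist (φ y) p + dist p (φ m)) + (dist (φ m) p + dist p (φ z)) := by
          gcongr <;> exact dist_triangle _ _ _
      _ ≤ dist (φ y) (φ z) + 2 * D := by
          rw [dist_comm (φ m) p, dist_comm (φ y) p] at *; linarith [hm]
      _ = dist y z + 2 * D := by rw [hiso]
  · calc dist x m + dist m z = dist (φ x) (φ m) + dist (φ m) (φ z) := by
          rw [hiso, hiso]
      _ ≤ (dist (φ x) p + dist p (φ m)) + (dist (φ m) p + dist p (φ z)) := by
          gcongr <;> exact dist_triangle _ _ _
      _ ≤ dist (φ x) (φ z) + 2 * D := by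
          rw [dist_comm (φ m) p] at *; linarith [hm]
      _ = dist x z + 2 * D := by rw [hiso]
end

section
/- Let X be a metric space, M a median metric space, φ : X → M an isometric embedding, and H ⊆ M a convex subset (i.e. for all p, q ∈ H, every point m of M with dist(p,m)+dist(m,q)=dist(p,q) belongs to H). Let D ≥ 0 and suppose that every point of H lies within distance D of the image φ(φ⁻¹(H)). Let x, y ∈ φ⁻¹(H), let δ ≥ 0, and let z ∈ X be δ-between x and y, i.e. dist(x,z)+dist(z,y) ≤ dist(x,y)+δ. Then the infimum of the distances from z to points of φ⁻¹(H) is at most δ/2 + D. -/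
/-- preimage of a convex subset of a median space under a
coarsely-onto-`H` isometric embedding coarsely contains every point
`δ`-between two of its points. -/
theorem stmt_1 {X M : Type*} [MetricSpace X] [MetricSpace M]
    (hmedian : ∀ a b c : M, ∃! m : M,
      dist a m + dist m b = dist a b ∧
      dist b m + dist m c = dist b c ∧
      dist a m + dist m c = dist a c)
    (φ : X → M) (hiso : ∀ x y : X, dist (φ x) (φ y) = dist x y)
    (H : Set M)
    (hconv : ∀ p ∈ H, ∀ q ∈ H, ∀ m : M, dist p m + dist m q = dist p q → m ∈ H)
    (D : ℝ) (hD : 0 ≤ D)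
    (hcoarse : ∀ p ∈ H, ∃ x ∈ φ ⁻¹' H, dist p (φ x) ≤ D)
    (x y : X) (hx : x ∈ φ ⁻¹' H) (hy : y ∈ φ ⁻¹' H)
    (δ : ℝ) (hδ : 0 ≤ δ) (z : X)
    (hz : dist x z + dist z y ≤ dist x y + δ) :
    Metric.infDist z (φ ⁻¹' H) ≤ δ / 2 + D := by
  obtain ⟨m, ⟨h1, h2, h3⟩, -⟩ := hmedian (φ x) (φ y) (φ z)
  have hmH : m ∈ H := hconv _ hx _ hy m h1
  have hzm : dist (φ z) m ≤ δ / 2 := by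
    have e1 : dist (φ x) (φ z) = dist x z := hiso x z
    have e2 : dist (φ z) (φ y) = dist z y := hiso z y
    have e3 : dist (φ x) (φ y) = dist x y := hiso x y
    have := dist_comm (φ z) m
    have := dist_comm (φ y) m
    nlinarith [dist_comm m (φ z), dist_comm (φ y) (φ z)]
  obtain ⟨w, hw, hwd⟩ := hcoarse m hmH
  calc Metric.infDist z (φ ⁻¹' H) ≤ dist z w := Metric.infDist_le_dist_of_mem hw
    _ = dist (φ z) (φ w) := (hiso z w).symm
    _ ≤ dist (φ z) m + dist m (φ w) := dist_triangle _ _ _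
    _ ≤ δ / 2 + D := add_le_add hzm hwd
end

section
/- Let (X, W, μ, side) be an encoding of a space with measured walls, with wall pseudo-metric pd. Let δ ≥ 0 and D ≥ 0 and assume: (i) X is δ-tripodal with respect to pd, i.e. every triple x, y, z admits a point m with pd(x,m)+pd(m,y) ≤ pd(x,y)+δ, pd(y,m)+pd(m,z) ≤ pd(y,z)+δ and pd(x,m)+pd(m,z) ≤ pd(x,z)+δ; and (ii) whenever a point z satisfies pd(x,z)+pd(z,y) ≤ pd(x,y)+δ for two points x, y that both lie in a half-space h(w,b), then pd(z, h(w,b)) ≤ D. Then for every wall w₀ and side b₀ with h₀ := h(w₀,b₀) nonempty, every point x with side(w₀, x) ≠ b₀, every point p ∈ h₀ with pd(x,p) ≤ pd(x,h₀) + 1, and every wall w such that side(w,x) ≠ side(w,p) and h(w, side(w,x)) ∩ h₀ ≠ ∅, one has pd(p, h(w, side(w,x))) ≤ 2D + δ + 1. -/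
open MeasureTheory

/-- implication (3) ⇒ (4) of Theorem 1.1. -/
theorem stmt_2 {X W : Type*} [Nonempty X] [MeasurableSpace W]
    (μ : Measure W) (side : W → X → Bool)
    (hmeas : ∀ x y : X, MeasurableSet {w : W | side w x ≠ side w y})
    (hfin : ∀ x y : X, μ {w : W | side w x ≠ side w y} < ⊤)
    (pd : X → X → ℝ)
    (hpd : ∀ x y : X, pd x y = (μ {w : W | side w x ≠ side w y}).toReal)
    (pdS : X → Set X → ℝ)
    (hpdS : ∀ (x : X) (A : Set X), pdS x A = sInf (pd x '' A))
    (δ D : ℝ) (hδ : 0 ≤ δ) (hD : 0 ≤ D)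
    -- (i) X is δ-tripodal with respect to pd
    (htripodal : ∀ x y z : X, ∃ m : X,
      pd x m + pd m y ≤ pd x y + δ ∧
      pd y m + pd m z ≤ pd y z + δ ∧
      pd x m + pd m z ≤ pd x z + δ)
    -- (ii) points δ-between two points of a half-space are D-close to it
    (hhalf : ∀ (w : W) (b : Bool) (x y z : X),
      side w x = b → side w y = b →
      pd x z + pd z y ≤ pd x y + δ →
      pdS z {q : X | side w q = b} ≤ D) :
    ∀ (w₀ : W) (b₀ : Bool), ({q : X | side w₀ q = b₀}).Nonempty →
      ∀ x : X, side w₀ x ≠ b₀ →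
      ∀ p : X, side w₀ p = b₀ →
        pd x p ≤ pdS x {q : X | side w₀ q = b₀} + 1 →
        ∀ w : W, side w x ≠ side w p →
          ({q : X | side w q = side w x} ∩ {q : X | side w₀ q = b₀}).Nonempty →
          pdS p {q : X | side w q = side w x} ≤ 2 * D + δ + 1 := by

  intro w₀ b₀ hne x hx p hp hxp w hw hWne
  have pd_nonneg : ∀ a b : X, 0 ≤ pd a b := fun a b => by
    rw [hpd]; exact ENNReal.toReal_nonneg
  have pd_symm : ∀ a b : X, pd a b = pd b a := by
    intro a b
    rw [hpd, hpd]
    have hset : {v : W | side v a ≠ side v b} = {v : W | side v b ≠ side v a} := by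
      ext v; exact ne_comm
    rw [hset]
  have pd_tri : ∀ a b c : X, pd a c ≤ pd a b + pd b c := by
    intro a b c
    rw [hpd, hpd, hpd]
    have hsub : {v : W | side v a ≠ side v c} ⊆
        {v : W | side v a ≠ side v b} ∪ {v : W | side v b ≠ side v c} := by
      intro v hv
      by_cases h : side v a = side v b
      · right
        simp only [Set.mem_setOf_eq] at hv ⊢
        rw [← h]; exact hv
      · left; exact h
    have h1 : μ {v : W | side v a ≠ side v c} ≤
        μ {v : W | side v a ≠ side v b} + μ {v : W | side v b ≠ side v c} :=
      (measure_mono hsub).trans (measure_union_le _ _)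
    calc (μ {v : W | side v a ≠ side v c}).toReal
        ≤ (μ {v : W | side v a ≠ side v b} + μ {v : W | side v b ≠ side v c}).toReal :=
          ENNReal.toReal_mono (ENNReal.add_ne_top.2 ⟨(hfin a b).ne, (hfin b c).ne⟩) h1
      _ = _ := ENNReal.toReal_add (hfin a b).ne (hfin b c).ne
  have bdd : ∀ (z : X) (A : Set X), BddBelow (pd z '' A) := by
    intro z A
    exact ⟨0, fun r hr => by obtain ⟨a, _, rfl⟩ := hr; exact pd_nonneg z a⟩
  have pdS_le : ∀ (z : X) (A : Set X), ∀ a ∈ A, pdS z A ≤ pd z a := by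
    intro z A a ha
    rw [hpdS]
    exact csInf_le (bdd z A) (Set.mem_image_of_mem _ ha)
  have pdS_near : ∀ (z : X) (A : Set X), A.Nonempty → ∀ c : ℝ, pdS z A < c →
      ∃ a ∈ A, pd z a < c := by
    intro z A hA c hc
    rw [hpdS] at hc
    obtain ⟨r, hr, hrc⟩ := exists_lt_of_csInf_lt (hA.image _) hc
    obtain ⟨a, ha, rfl⟩ := hr
    exact ⟨a, ha, hrc⟩
  obtain ⟨y, hy1, hy2⟩ := hWne
  simp only [Set.mem_setOf_eq] at hy1 hy2
  obtain ⟨m, h1, h2, h3⟩ := htripodal x p y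
  have hmw : pdS m {q : X | side w q = side w x} ≤ D :=
    hhalf w (side w x) x y m rfl hy1 h3
  have hm0 : pdS m {q : X | side w₀ q = b₀} ≤ D :=
    hhalf w₀ b₀ p y m hp hy2 h2
  have hSne : ({q : X | side w q = side w x}).Nonempty := ⟨x, rfl⟩
  apply le_of_forall_pos_le_add
  intro ε hε
  obtain ⟨m', hm'0, hm'd⟩ := pdS_near m _ hne (D + ε / 2) (by linarith)
  obtain ⟨a, haS, had⟩ := pdS_near m _ hSne (D + ε / 2) (by linarith)
  have k1 : pdS x {q : X | side w₀ q = b₀} ≤ pd x m' := pdS_le x _ m' hm'0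
  have k2 : pd x m' ≤ pd x m + pd m m' := pd_tri x m m'
  have k3 : pd m p ≤ D + δ + 1 + ε / 2 := by
    have := pd_symm p m
    linarith
  have k4 : pdS p {q : X | side w q = side w x} ≤ pd p a := pdS_le p _ a haS
  have k5 : pd p a ≤ pd p m + pd m a := pd_tri p m a
  have := pd_symm p m
  linarith
end

section
/- Let (X, W, μ, side) be an encoding of a space with measured walls, with wall pseudo-metric pd. Let K ≥ 0 and assume: for every wall w₀ and side b₀ with h₀ := h(w₀,b₀) nonempty, every point x with side(w₀,x) ≠ b₀, every p ∈ h₀ with pd(x,p) ≤ pd(x,h₀)+1, and every measurable set E of walls such that each w ∈ E satisfies side(w,x) ≠ side(w,p) and h(w, side(w,x)) ∩ h₀ ≠ ∅, one has μ(E) ≤ K. Let τ : W → Bool be an admissible section such that for every y ∈ X the set {w | τ(w) ≠ side(w,y)} is measurable with finite measure, and let x ∈ X satisfy μ({w | τ(w) ≠ side(w,x)}).toReal ≤ inf_{y ∈ X} μ({w | τ(w) ≠ side(w,y)}).toReal + 1. Then for every wall w with τ(w) ≠ side(w,x) there exists a point p ∈ X with side(w,p) = τ(w) and pd(x,p) ≤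 2K + 1. -/
open MeasureTheory

/-- key claim in (4) ⇒ (1) of Theorem 1.1. -/
theorem stmt_3 {X W : Type*} [Nonempty X] [MeasurableSpace W]
    (μ : Measure W) (side : W → X → Bool)
    (hmeas : ∀ x y : X, MeasurableSet {w : W | side w x ≠ side w y})
    (hfin : ∀ x y : X, μ {w : W | side w x ≠ side w y} < ⊤)
    (pd : X → X → ℝ)
    (hpd : ∀ x y : X, pd x y = (μ {w : W | side w x ≠ side w y}).toReal)
    (pdS : X → Set X → ℝ)
    (hpdS : ∀ (x : X) (A : Set X), pdS x A = sInf (pd x '' A))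
    (K : ℝ) (hK : 0 ≤ K)
    -- hypothesis (4)
    (hyp4 : ∀ (w₀ : W) (b₀ : Bool), ({q : X | side w₀ q = b₀}).Nonempty →
      ∀ x : X, side w₀ x ≠ b₀ →
      ∀ p : X, side w₀ p = b₀ →
        pd x p ≤ pdS x {q : X | side w₀ q = b₀} + 1 →
        ∀ E : Set W, MeasurableSet E →
          (∀ w ∈ E, side w x ≠ side w p ∧
            ({q : X | side w q = side w x} ∩ {q : X | side w₀ q = b₀}).Nonempty) →
          (μ E).toReal ≤ K)
    -- τ is an admissible section
    (τ : W → Bool)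
    (hadm : ∀ (w w' : W) (b b' : Bool),
      {q : X | side w q = b} ⊆ {q : X | side w' q = b'} → τ w = b → τ w' = b')
    (hτmeas : ∀ y : X, MeasurableSet {w : W | τ w ≠ side w y})
    (hτfin : ∀ y : X, μ {w : W | τ w ≠ side w y} < ⊤)
    -- x almost realizes the distance from τ to X
    (x : X)
    (hxmin : (μ {w : W | τ w ≠ side w x}).toReal ≤
      (⨅ y : X, (μ {w : W | τ w ≠ side w y}).toReal) + 1) :
    ∀ w : W, τ w ≠ side w x →
      ∃ p : X, side w p = τ w ∧ pd x p ≤ 2 * K + 1 := by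

  intro w hw
  set b₀ := τ w with hb₀
  set h₀ : Set X := {q : X | side w q = b₀} with hh₀
  have hne : h₀.Nonempty := by
    by_contra h
    rw [Set.not_nonempty_iff_eq_empty] at h
    exact hw (hadm w w b₀ (side w x) (by rw [← hh₀, h]; exact Set.empty_subset _) rfl)
  have himg : (pd x '' h₀).Nonempty := hne.image _
  obtain ⟨r, ⟨p, hp, rfl⟩, hr⟩ := exists_lt_of_csInf_lt himg (lt_add_one (sInf (pd x '' h₀)))
  have hpdist : pd x p ≤ pdS x h₀ + 1 := by rw [hpdS]; exact hr.le
  have hsxp : side w p = b₀ := hp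
  refine ⟨p, hsxp, ?_⟩
  set Dx : Set W := {w' : W | τ w' ≠ side w' x} with hDx
  set Dp : Set W := {w' : W | τ w' ≠ side w' p} with hDp
  set S : Set W := {w' : W | side w' x ≠ side w' p} with hS
  have hSm : MeasurableSet S := hmeas x p
  have hDxm : MeasurableSet Dx := hτmeas x
  set E₁ : Set W := Dx ∩ S with hE₁
  set E₂ : Set W := S \ Dx with hE₂
  have hE₂m : MeasurableSet E₂ := hSm.diff hDxm
  -- boolean helper
  have bool3 : ∀ a b c : Bool, a ≠ b → c ≠ a → c = b := by decide
  -- hyp4 applied to E₂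
  have hE₂K : (μ E₂).toReal ≤ K := by
    refine hyp4 w b₀ hne x (fun h => hw h.symm) p hsxp hpdist E₂ hE₂m ?_
    intro w' hw'
    obtain ⟨hw'S, hw'Dx⟩ := hw'
    have hτw' : τ w' = side w' x := by
      by_contra h; exact hw'Dx h
    refine ⟨hw'S, ?_⟩
    by_contra hemp
    rw [Set.not_nonempty_iff_eq_empty] at hemp
    have sub : h₀ ⊆ {q : X | side w' q = side w' p} := by
      intro q hq
      have hqx : side w' q ≠ side w' x := by
        intro hqx
        have : q ∈ ({q : X | side w' q = side w' x} ∩ h₀) := ⟨hqx, hq⟩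
        rw [hemp] at this; exact this
      exact bool3 _ _ _ hw'S hqx
    have := hadm w w' b₀ (side w' p) sub rfl
    rw [hτw'] at this
    exact hw'S this
  -- set identities
  have hDpEq : Dp = (Dx \ S) ∪ E₂ := by
    have key : ∀ a b c : Bool,
        (a ≠ c ↔ (a ≠ b ∧ ¬ b ≠ c) ∨ (b ≠ c ∧ ¬ a ≠ b)) := by decide
    ext w'
    simp only [hDp, hDx, hS, hE₂, Set.mem_union, Set.mem_diff, Set.mem_setOf_eq]
    exact key (τ w') (side w' x) (side w' p)
  have hdisj : Disjoint (Dx \ S) E₂ := by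
    rw [Set.disjoint_left]
    intro w' hw' hw2
    exact hw'.2 hw2.1
  -- finiteness
  have hSfin : μ S ≠ ⊤ := (hfin x p).ne
  have hDxfin : μ Dx ≠ ⊤ := (hτfin x).ne
  have hE₁fin : μ E₁ ≠ ⊤ := (lt_of_le_of_lt (measure_mono Set.inter_subset_right) (hfin x p)).ne
  have hE₂fin : μ E₂ ≠ ⊤ := (lt_of_le_of_lt (measure_mono Set.diff_subset) (hfin x p)).ne
  have hDfin : μ (Dx \ S) ≠ ⊤ := (lt_of_le_of_lt (measure_mono Set.diff_subset) (hτfin x)).ne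
  -- measure identities
  have hmDx : μ (Dx \ S) + μ E₁ = μ Dx := by
    rw [hE₁]; exact measure_diff_add_inter Dx hSm
  have hmS : μ E₂ + μ E₁ = μ S := by
    rw [hE₂, hE₁, Set.inter_comm]; exact measure_diff_add_inter S hDxm
  have hmDp : μ Dp = μ (Dx \ S) + μ E₂ := by
    rw [hDpEq]; exact measure_union hdisj hE₂m
  -- pass to reals
  have hdx : (μ Dx).toReal = (μ (Dx \ S)).toReal + (μ E₁).toReal := by
    rw [← ENNReal.toReal_add hDfin hE₁fin, hmDx]
  have hdp : (μ Dp).toReal = (μ (Dx \ S)).toReal + (μ E₂).toReal := by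
    rw [hmDp, ENNReal.toReal_add hDfin hE₂fin]
  have hs : (μ S).toReal = (μ E₂).toReal + (μ E₁).toReal := by
    rw [← ENNReal.toReal_add hE₂fin hE₁fin, hmS]
  -- infimum bound
  have hinf : (⨅ y : X, (μ {w' : W | τ w' ≠ side w' y}).toReal) ≤ (μ Dp).toReal :=
    ciInf_le ⟨0, fun r ⟨y, hy⟩ => hy ▸ ENNReal.toReal_nonneg⟩ p
  have hchain : (μ Dx).toReal ≤ (μ Dp).toReal + 1 := le_trans hxmin (by linarith)
  have hE₁le : (μ E₁).toReal ≤ (μ E₂).toReal + 1 := by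
    rw [hdx, hdp] at hchain; linarith
  rw [hpd]
  have : (μ S).toReal ≤ 2 * K + 1 := by rw [hs]; linarith
  exact this
end

section
/- Let X and Y be metric spaces, δ ≥ 0, μ ≥ 0, and suppose X is δ-tripodal and Y is μ-tripodal. Then the product X × Y equipped with the ℓ¹ product metric dist((x,y),(x',y')) = dist_X(x,x') + dist_Y(y,y') is (δ+μ)-tripodal. -/
/-- the ℓ¹ product of a δ-tripodal space and a μ-tripodal space
is (δ+μ)-tripodal. -/
theorem stmt_6 {X Y : Type*} [MetricSpace X] [MetricSpace Y]
    (δ μ : ℝ) (hδ : 0 ≤ δ) (hμ : 0 ≤ μ)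
    (hX : ∀ x y z : X, ∃ m : X,
      dist x m + dist m y ≤ dist x y + δ ∧
      dist y m + dist m z ≤ dist y z + δ ∧
      dist x m + dist m z ≤ dist x z + δ)
    (hY : ∀ x y z : Y, ∃ m : Y,
      dist x m + dist m y ≤ dist x y + μ ∧
      dist y m + dist m z ≤ dist y z + μ ∧
      dist x m + dist m z ≤ dist x z + μ) :
    ∀ x y z : X × Y, ∃ m : X × Y,
      (dist x.1 m.1 + dist x.2 m.2) + (dist m.1 y.1 + dist m.2 y.2) ≤
        (dist x.1 y.1 + dist x.2 y.2) + (δ + μ) ∧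
      (dist y.1 m.1 + dist y.2 m.2) + (dist m.1 z.1 + dist m.2 z.2) ≤
        (dist y.1 z.1 + dist y.2 z.2) + (δ + μ) ∧
      (dist x.1 m.1 + dist x.2 m.2) + (dist m.1 z.1 + dist m.2 z.2) ≤
        (dist x.1 z.1 + dist x.2 z.2) + (δ + μ) := by
  intro x y z
  obtain ⟨m1, h1, h2, h3⟩ := hX x.1 y.1 z.1
  obtain ⟨m2, g1, g2, g3⟩ := hY x.2 y.2 z.2
  exact ⟨(m1, m2), by linarith, by linarith, by linarith⟩
end

section
/- Let E be a real inner product space containing two orthonormal vectors (for instance the Euclidean space ℝⁿ with n ≥ 2, or any real Hilbert space of dimension at least 2). Then for every δ ≥ 0 the space E is not δ-tripodal: there exist three points x, y, z in E such that no point m of E is simultaneously δ-between x and y, δ-between y and z, and δ-between x and z. -/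
/-!
Take the triangle `0, r • u, r • v`. If `m` is `δ`-between `0` and `y`, projecting `y - m` onto `y`
gives `‖y‖ ‖m‖ ≤ ⟪m, y⟫ + δ ‖y‖`, i.e. `m` lies in a thin cone around `y`. Adding this for `y = r • u`
and `y = r • v` and using `‖u + v‖ = √2 < 2` forces `‖m‖ ≤ 4δ`. But a point `δ`-between `r • u` and
`r • v` is at distance at least `((2 - √2) r - δ) / 2` from `0`, since `‖u - v‖ = √2 < 2` as well;
so for `r > 18 |δ|` no such `m` exists.
-/

open RealInnerProductSpace

def DeltaBtw {X : Type*} [PseudoMetricSpace X] (δ : ℝ) (x m y : X) : Prop :=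
  dist x m + dist m y ≤ dist x y + δ

theorem DeltaBtw.two_mul_sub_dist_le {X : Type*} [PseudoMetricSpace X] {δ r : ℝ} {o y z m : X}
    (hy : dist o y = r) (hz : dist o z = r) (h : DeltaBtw δ y m z) :
    2 * (r - dist o m) ≤ dist y z + δ := by
  have hmy := dist_triangle o m y
  have hmz := dist_triangle o m z
  rw [DeltaBtw, dist_comm y m] at h
  linarith

section InnerProductSpace

variable {E : Type*} [NormedAddCommGroup E] [InnerProductSpace ℝ E]

theorem DeltaBtw.norm_mul_norm_le_inner {δ : ℝ} {m y : E} (h : DeltaBtw δ 0 m y) :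
    ‖y‖ * ‖m‖ ≤ ⟪m, y⟫ + δ * ‖y‖ := by
  have hproj : ‖y‖ ^ 2 - ⟪m, y⟫ ≤ ‖m - y‖ * ‖y‖ := by
    have := real_inner_le_norm (y - m) y
    rwa [inner_sub_left, real_inner_self_eq_norm_sq, norm_sub_rev] at this
  rw [DeltaBtw, dist_zero_left, dist_zero_left, dist_eq_norm] at h
  nlinarith [norm_nonneg y]

theorem norm_mul_le_of_deltaBtw_zero {δ r : ℝ} {m y z : E} (hy : ‖y‖ = r) (hz : ‖z‖ = r)
    (hmy : DeltaBtw δ 0 m y) (hmz : DeltaBtw δ 0 m z) :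
    (2 * r - ‖y + z‖) * ‖m‖ ≤ 2 * δ * r := by
  have h₁ := hmy.norm_mul_norm_le_inner
  have h₂ := hmz.norm_mul_norm_le_inner
  have hcs := real_inner_le_norm m (y + z)
  rw [hy] at h₁
  rw [hz] at h₂
  rw [inner_add_right] at hcs
  linarith

theorem not_deltaBtw_triangle {δ r : ℝ} {y z : E} (hr : 0 < r) (hδr : 18 * δ < r)
    (hy : ‖y‖ = r) (hz : ‖z‖ = r) (hadd : ‖y + z‖ ≤ 3 / 2 * r) (hsub : ‖y - z‖ ≤ 3 / 2 * r)
    (m : E) : ¬ (DeltaBtw δ 0 m y ∧ DeltaBtw δ y m z ∧ DeltaBtw δ 0 m z) := by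
  rintro ⟨hmy, hyz, hmz⟩
  have hm : ‖m‖ ≤ 4 * δ := by
    have := norm_mul_le_of_deltaBtw_zero hy hz hmy hmz
    nlinarith [norm_nonneg m]
  have hside := hyz.two_mul_sub_dist_le (o := 0) (by simpa using hy) (by simpa using hz)
  rw [dist_zero_left, dist_eq_norm] at hside
  linarith

end InnerProductSpace

theorem stmt_7_general {E : Type*} [NormedAddCommGroup E] [InnerProductSpace ℝ E]
    (u v : E) (hu : ‖u‖ = 1) (hv : ‖v‖ = 1) (huv : (inner ℝ u v : ℝ) = 0)
    (δ : ℝ) :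
    ∃ x y z : E, ∀ m : E,
      ¬ (dist x m + dist m y ≤ dist x y + δ ∧
         dist y m + dist m z ≤ dist y z + δ ∧
         dist x m + dist m z ≤ dist x z + δ) := by
  have hadd : ‖u + v‖ ≤ 3 / 2 := by
    have := norm_add_sq_eq_norm_sq_add_norm_sq_real huv
    rw [hu, hv] at this
    nlinarith [norm_nonneg (u + v)]
  have hsub : ‖u - v‖ ≤ 3 / 2 := by
    have := norm_sub_sq_eq_norm_sq_add_norm_sq_real huv
    rw [hu, hv] at this
    nlinarith [norm_nonneg (u - v)]
  set r := 18 * |δ| + 1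
  have hr : 0 < r := by positivity
  have hnorm (w : E) : ‖r • w‖ = r * ‖w‖ := by rw [norm_smul, Real.norm_of_nonneg hr.le]
  refine ⟨0, r • u, r • v, not_deltaBtw_triangle hr (by linarith [le_abs_self δ]) ?_ ?_ ?_ ?_⟩
  · rw [hnorm, hu, mul_one]
  · rw [hnorm, hv, mul_one]
  · rw [← smul_add, hnorm]; nlinarith
  · rw [← smul_sub, hnorm]; nlinarith

/-- a real inner product space containing two orthonormal vectors
is not δ-tripodal for any δ ≥ 0. -/
theorem stmt_7 {E : Type*} [NormedAddCommGroup E] [InnerProductSpace ℝ E]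
    (u v : E) (hu : ‖u‖ = 1) (hv : ‖v‖ = 1) (huv : (inner ℝ u v : ℝ) = 0)
    (δ : ℝ) (hδ : 0 ≤ δ) :
    ∃ x y z : E, ∀ m : E,
      ¬ (dist x m + dist m y ≤ dist x y + δ ∧
         dist y m + dist m z ≤ dist y z + δ ∧
         dist x m + dist m z ≤ dist x z + δ) :=
  stmt_7_general u v hu hv huv δ
end

section
/- Let a and b be real numbers with a ≥ b ≥ 0 and let α be a real number with 0 < α < 1. Then a^α + b^α − (a+b)^α ≥ b^α · (2 − 2^α), and moreover b^α · (2 − 2^α) ≥ 0. -/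
/-!
Since `t ↦ t ^ α` is concave on `[0, ∞)`, its increments over intervals of a fixed length `b`
decrease as the interval moves right. Comparing `[a, a + b]` with `[b, 2b]` gives
`(a + b) ^ α - a ^ α ≤ (2b) ^ α - b ^ α = b ^ α (2 ^ α - 1)`, which rearranges to the claim.
-/

section ConcaveIncrement

variable {𝕜 β : Type*} [Field 𝕜] [LinearOrder 𝕜] [IsStrictOrderedRing 𝕜]
  [AddCommMonoid β] [PartialOrder β] [IsOrderedAddMonoid β] [Module 𝕜 β]
  {s : Set 𝕜} {f : 𝕜 → β}

/-- The increments `f (x + d) - f x` of a concave function decrease in `x` (stated without subtraction). -/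
theorem ConcaveOn.map_add_map_add_le {x y d : 𝕜} (hf : ConcaveOn 𝕜 s f) (hx : x ∈ s)
    (hyd : y + d ∈ s) (hxy : x ≤ y) (hd : 0 ≤ d) :
    f x + f (y + d) ≤ f y + f (x + d) := by
  rcases (add_nonneg (sub_nonneg.2 hxy) hd).eq_or_lt with hL | hL
  · obtain rfl : d = 0 := by linarith
    obtain rfl : x = y := by linarith
    exact le_rfl
  -- `y` and `x + d` are the convex combinations of `x` and `y + d` with swapped weights.
  set L := y - x + d
  have hw : d / L + (y - x) / L = 1 := by rw [← add_div, add_comm d]; exact div_self hL.ne'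
  have hy := hf.2 hx hyd (div_nonneg hd hL.le) (div_nonneg (sub_nonneg.2 hxy) hL.le) hw
  have hxd := hf.2 hx hyd (div_nonneg (sub_nonneg.2 hxy) hL.le) (div_nonneg hd hL.le)
    ((add_comm _ _).trans hw)
  have hy_eq : (d / L) • x + ((y - x) / L) • (y + d) = y := by
    simp only [smul_eq_mul]; field_simp; ring
  have hxd_eq : ((y - x) / L) • x + (d / L) • (y + d) = x + d := by
    simp only [smul_eq_mul]; field_simp; ring
  rw [hy_eq] at hy
  rw [hxd_eq] at hxd
  calc f x + f (y + d)
      = (d / L + (y - x) / L) • f x + ((y - x) / L + d / L) • f (y + d) := by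
        rw [hw, add_comm ((y - x) / L), hw, one_smul, one_smul]
    _ = ((d / L) • f x + ((y - x) / L) • f (y + d)) +
          (((y - x) / L) • f x + (d / L) • f (y + d)) := by
        rw [add_smul, add_smul]; abel
    _ ≤ f y + f (x + d) := add_le_add hy hxd

end ConcaveIncrement

/-- Lemma 5.1(2): for a ≥ b ≥ 0 and 0 < α < 1,
a^α + b^α − (a+b)^α ≥ b^α (2 − 2^α) ≥ 0. -/
theorem stmt_9 (a b α : ℝ) (hb : 0 ≤ b) (hba : b ≤ a)
    (hα0 : 0 < α) (hα1 : α < 1) :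
    a ^ α + b ^ α - (a + b) ^ α ≥ b ^ α * (2 - 2 ^ α) ∧
    b ^ α * (2 - 2 ^ α) ≥ 0 := by
  have hincr : b ^ α + (a + b) ^ α ≤ a ^ α + (b + b) ^ α :=
    (Real.concaveOn_rpow hα0.le hα1.le).map_add_map_add_le hb (by simp; linarith) hba hb
  have hdouble : (b + b) ^ α = 2 ^ α * b ^ α := by
    rw [← two_mul, Real.mul_rpow zero_le_two hb]
  have htwo : (2 : ℝ) ^ α ≤ 2 := by
    simpa using Real.rpow_le_rpow_of_exponent_le one_le_two hα1.le
  exact ⟨by nlinarith, mul_nonneg (Real.rpow_nonneg hb α) (by linarith)⟩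
end

section
/- Let X be a metric space and let α be a real number with 0 < α < 1. If three points x, y, z of X satisfy dist(x,z)^α + dist(z,y)^α = dist(x,y)^α, then z = x or z = y. In other words, in the snowflaked metric dist^α, the interval between any two points x and y reduces to {x, y}. -/
lemma strict_sub {a b α : ℝ} (ha : 0 < a) (hb : 0 < b) (hα0 : 0 < α) (hα1 : α < 1) :
    (a + b) ^ α < a ^ α + b ^ α := by
  have hab : 0 < a + b := by linarith
  have h1 : (a + b) ^ α = a * (a + b) ^ (α - 1) + b * (a + b) ^ (α - 1) := by
    rw [← add_mul]
    have := Real.rpow_add_one hab.ne' (α - 1)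
    simp only [sub_add_cancel] at this
    rw [this]; ring
  have ha1 : (a + b) ^ (α - 1) < a ^ (α - 1) :=
    Real.rpow_lt_rpow_of_neg ha (by linarith) (by linarith)
  have hb1 : (a + b) ^ (α - 1) < b ^ (α - 1) :=
    Real.rpow_lt_rpow_of_neg hb (by linarith) (by linarith)
  have ha2 : a * (a + b) ^ (α - 1) < a * a ^ (α - 1) := mul_lt_mul_of_pos_left ha1 ha
  have hb2 : b * (a + b) ^ (α - 1) < b * b ^ (α - 1) := mul_lt_mul_of_pos_left hb1 hb
  have haa : a * a ^ (α - 1) = a ^ α := by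
    have := Real.rpow_add_one ha.ne' (α - 1)
    simp only [sub_add_cancel] at this
    rw [this]; ring
  have hbb : b * b ^ (α - 1) = b ^ α := by
    have := Real.rpow_add_one hb.ne' (α - 1)
    simp only [sub_add_cancel] at this
    rw [this]; ring
  rw [h1]; linarith

/-- Proposition 5.2(1): in the snowflaked metric dist^α,
intervals are trivial. -/
theorem stmt_10 {X : Type*} [MetricSpace X] (α : ℝ) (hα0 : 0 < α) (hα1 : α < 1)
    (x y z : X) (h : dist x z ^ α + dist z y ^ α = dist x y ^ α) :
    z = x ∨ z = y := by
  by_contra hc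
  push_neg at hc
  obtain ⟨hzx, hzy⟩ := hc
  have ha : 0 < dist x z := dist_pos.2 (fun e => hzx e.symm)
  have hb : 0 < dist z y := dist_pos.2 hzy
  have htri : dist x y ≤ dist x z + dist z y := dist_triangle x z y
  have h2 : dist x y ^ α ≤ (dist x z + dist z y) ^ α :=
    Real.rpow_le_rpow dist_nonneg htri hα0.le
  have := strict_sub ha hb hα0 hα1
  linarith
end

section
/- Let X be a metric space, let α be a real number with 0 < α < 1, and let δ ≥ 0. Suppose x, y, z, m are points of X such that m is δ-between each pair with respect to the snowflaked metric dist^α, i.e. dist(x,m)^α + dist(m,y)^α ≤ dist(x,y)^α + δ, dist(y,m)^α + dist(m,z)^α ≤ dist(y,z)^α + δ, and dist(x,m)^α + dist(m,z)^α ≤ dist(x,z)^α + δ. Then the minimum of dist(x,y)^α, dist(y,z)^α, dist(x,z)^α is at most 2δ/(2 − 2^α). -/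
/-! In the snowflake `dist ^ α` the triangle inequality has slack: by concavity of `t ↦ t ^ α`,
`(u + v) ^ α ≤ u ^ α + v ^ α - (2 - 2 ^ α) * min u v ^ α`. So a point `m` that is `δ`-between
`a` and `b` must be `δ / (2 - 2 ^ α)`-close (in `dist ^ α`) to one of them. Among the three pairs
of `x, y, z` this singles out two points close to `m`, and these are `2 δ / (2 - 2 ^ α)`-close to
each other by subadditivity of `t ↦ t ^ α`. -/

open Set

lemma ConcaveOn.add_sub_le_add_sub {s : Set ℝ} {f : ℝ → ℝ} (hf : ConcaveOn ℝ s f) {a b h : ℝ}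
    (ha : a ∈ s) (hbh : b + h ∈ s) (hab : a ≤ b) (hh : 0 ≤ h) :
    f (b + h) - f b ≤ f (a + h) - f a := by
  rcases (add_nonneg (sub_nonneg.2 hab) hh).eq_or_lt with hL | hL
  · obtain rfl : h = 0 := by linarith
    obtain rfl : b = a := by linarith
    rfl
  set L := b - a + h
  -- both `b` and `a + h` are convex combinations of the endpoints `a` and `b + h`
  have hb := hf.2 ha hbh (div_nonneg hh hL.le) (div_nonneg (sub_nonneg.2 hab) hL.le)
    (by field_simp; ring)
  have hah := hf.2 ha hbh (div_nonneg (sub_nonneg.2 hab) hL.le) (div_nonneg hh hL.le)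
    (by field_simp; ring)
  simp only [smul_eq_mul] at hb hah
  rw [show h / L * a + (b - a) / L * (b + h) = b by field_simp; ring] at hb
  rw [show (b - a) / L * a + h / L * (b + h) = a + h by field_simp; ring] at hah
  have hsum : h / L + (b - a) / L = 1 := by field_simp; ring
  linear_combination hb + hah - (f a + f (b + h)) * hsum

namespace Real

lemma add_rpow_le_rpow_add_mul_rpow {α u v : ℝ} (hα0 : 0 ≤ α) (hα1 : α ≤ 1) (hu : 0 ≤ u)
    (huv : u ≤ v) : (u + v) ^ α ≤ v ^ α + (2 ^ α - 1) * u ^ α := by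
  have h := (concaveOn_rpow hα0 hα1).add_sub_le_add_sub (a := u) (b := v) (h := u) hu
    (by simp only [mem_Ici]; linarith) huv hu
  rw [← two_mul, mul_rpow zero_le_two hu, add_comm v] at h
  linarith

end Real

section Snowflake

open Real

variable {X : Type*} [MetricSpace X] {α δ : ℝ}

lemma snowflake_between_dist_le_or (hα0 : 0 ≤ α) (hα1 : α ≤ 1) {a b m : X}
    (h : dist a m ^ α + dist m b ^ α ≤ dist a b ^ α + δ) :
    (2 - 2 ^ α) * dist a m ^ α ≤ δ ∨ (2 - 2 ^ α) * dist b m ^ α ≤ δ := by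
  have htri : dist a b ^ α ≤ (dist a m + dist m b) ^ α :=
    rpow_le_rpow dist_nonneg (dist_triangle a m b) hα0
  rw [dist_comm b m]
  rcases le_total (dist a m) (dist m b) with hle | hle
  · have := add_rpow_le_rpow_add_mul_rpow hα0 hα1 dist_nonneg hle
    left; linarith
  · have := add_rpow_le_rpow_add_mul_rpow hα0 hα1 dist_nonneg hle
    rw [add_comm] at this
    right; linarith

lemma snowflake_dist_le_of_dist_le (hα0 : 0 ≤ α) (hα1 : α < 1) {a b m : X}
    (ha : (2 - 2 ^ α) * dist a m ^ α ≤ δ) (hb : (2 - 2 ^ α) * dist b m ^ α ≤ δ) :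
    dist a b ^ α ≤ 2 * δ / (2 - 2 ^ α) := by
  have hc : 0 < 2 - (2 : ℝ) ^ α := by
    linarith [rpow_lt_rpow_of_exponent_lt one_lt_two hα1, rpow_one (2 : ℝ)]
  rw [le_div_iff₀ hc]
  have htri : dist a b ^ α ≤ dist a m ^ α + dist b m ^ α :=
    calc dist a b ^ α ≤ (dist a m + dist m b) ^ α :=
          rpow_le_rpow dist_nonneg (dist_triangle a m b) hα0
      _ ≤ dist a m ^ α + dist b m ^ α := by
          rw [dist_comm m b]
          exact rpow_add_le_add_rpow dist_nonneg dist_nonneg hα0 hα1.le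
  nlinarith

end Snowflake

theorem stmt_11_general {X : Type*} [MetricSpace X] (α : ℝ) (hα0 : 0 < α) (hα1 : α < 1)
    (δ : ℝ) (x y z m : X)
    (hxy : dist x m ^ α + dist m y ^ α ≤ dist x y ^ α + δ)
    (hyz : dist y m ^ α + dist m z ^ α ≤ dist y z ^ α + δ)
    (hxz : dist x m ^ α + dist m z ^ α ≤ dist x z ^ α + δ) :
    min (dist x y ^ α) (min (dist y z ^ α) (dist x z ^ α)) ≤
      2 * δ / (2 - 2 ^ α) := by
  have close := @snowflake_dist_le_of_dist_le X _ α δ hα0.le hα1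
  rcases snowflake_between_dist_le_or hα0.le hα1.le hxy with hx | hy
  · rcases snowflake_between_dist_le_or hα0.le hα1.le hyz with hy | hz
    · exact (min_le_left _ _).trans (close hx hy)
    · exact (min_le_right _ _).trans <| (min_le_right _ _).trans (close hx hz)
  · rcases snowflake_between_dist_le_or hα0.le hα1.le hxz with hx | hz
    · exact (min_le_left _ _).trans (close hx hy)
    · exact (min_le_right _ _).trans <| (min_le_left _ _).trans (close hy hz)

/-- quantitative core of Proposition 5.2(2): a δ-median point for
a triple in the snowflaked metric dist^α forces two of the three points to be
at bounded distance. -/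
theorem stmt_11 {X : Type*} [MetricSpace X] (α : ℝ) (hα0 : 0 < α) (hα1 : α < 1)
    (δ : ℝ) (hδ : 0 ≤ δ) (x y z m : X)
    (hxy : dist x m ^ α + dist m y ^ α ≤ dist x y ^ α + δ)
    (hyz : dist y m ^ α + dist m z ^ α ≤ dist y z ^ α + δ)
    (hxz : dist x m ^ α + dist m z ^ α ≤ dist x z ^ α + δ) :
    min (dist x y ^ α) (min (dist y z ^ α) (dist x z ^ α)) ≤
      2 * δ / (2 - 2 ^ α) :=
  stmt_11_general α hα0 hα1 δ x y z m hxy hyz hxz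
end

section
/- Let X be a metric space and let α be a real number with 0 < α < 1. Assume that for every R > 0 there exist three points x, y, z in X whose pairwise distances dist(x,y), dist(y,z), dist(x,z) are all at least R. Then for every δ > 0 the space X with the snowflaked metric dist^α is not δ-tripodal: there exist points x, y, z in X such that no point m of X satisfies all three inequalities dist(x,m)^α + dist(m,y)^α ≤ dist(x,y)^α + δ, dist(y,m)^α + dist(m,z)^α ≤ dist(y,z)^α + δ, and dist(x,m)^α + dist(m,z)^α ≤ dist(x,z)^α + δ. (In particular (X, dist^α) is not δ-median for any δ > 0.) -/
/-!
Concavity of `t ↦ t ^ α` gives the quantitative gap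
`(a + b) ^ α ≤ a ^ α + b ^ α - (2 - 2 ^ α) * (min a b) ^ α`, where `2 ^ α < 2` as `α < 1`.
Hence if `m` is `δ`-between `p` and `q` for `dist ^ α`, the triangle inequality forces `m` to lie
within a radius `r`, depending only on `α` and `δ`, of `p` or of `q`. For a triple with pairwise
distances larger than `2 r`, a point `m` between each pair would be within `r` of two of its
points, which is impossible.
-/

open Real Set

theorem ConcaveOn.add_le_add_of_mem_Icc {s : Set ℝ} {f : ℝ → ℝ} (hf : ConcaveOn ℝ s f)
    {a w u v : ℝ} (ha : a ∈ s) (hw : w ∈ s) (hu : u ∈ Icc a w) (huv : u + v = a + w) :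
    f a + f w ≤ f u + f v := by
  obtain ⟨hau, huw⟩ := hu
  rcases eq_or_lt_of_le (hau.trans huw) with rfl | haw
  · obtain rfl : u = a := le_antisymm huw hau
    obtain rfl : v = u := by linarith
    rfl
  -- `u` and `v` are the two convex combinations of `a` and `w` with swapped weights
  set l := (w - u) / (w - a)
  set k := (u - a) / (w - a)
  have hl : 0 ≤ l := div_nonneg (by linarith) (by linarith)
  have hk : 0 ≤ k := div_nonneg (by linarith) (by linarith)
  have hlk : l + k = 1 := by simp only [l, k]; field_simp; ring
  have hu' : l • a + k • w = u := by simp only [l, k, smul_eq_mul]; field_simp; ring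
  have hv' : k • a + l • w = v := by
    simp only [l, k, smul_eq_mul]
    field_simp
    linear_combination (a - w) * huv
  have h₁ := hf.2 ha hw hl hk hlk
  have h₂ := hf.2 ha hw hk hl (by linarith)
  rw [hu'] at h₁
  rw [hv'] at h₂
  simp only [smul_eq_mul] at h₁ h₂
  linear_combination h₁ + h₂ - (f a + f w) * hlk

namespace Real

theorem add_rpow_le_rpow_add_rpow_sub_mul_min_rpow {p : ℝ} (hp₀ : 0 ≤ p) (hp₁ : p ≤ 1)
    {a b : ℝ} (ha : 0 ≤ a) (hb : 0 ≤ b) :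
    (a + b) ^ p ≤ a ^ p + b ^ p - (2 - 2 ^ p) * min a b ^ p := by
  wlog hab : a ≤ b generalizing a b
  · simpa only [add_comm, min_comm] using this hb ha (le_of_not_ge hab)
  have key := (concaveOn_rpow hp₀ hp₁).add_le_add_of_mem_Icc (u := 2 * a) (v := b)
    (mem_Ici.2 ha) (mem_Ici.2 (add_nonneg ha hb)) ⟨by linarith, by linarith⟩ (by ring)
  rw [mul_rpow zero_le_two ha] at key
  rw [min_eq_left hab]
  linarith

theorem two_rpow_lt_two {p : ℝ} (hp : p < 1) : (2 : ℝ) ^ p < 2 :=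
  rpow_lt_self_of_one_lt one_lt_two hp

end Real

theorem dist_le_or_dist_le_of_snowflake_between {X : Type*} [PseudoMetricSpace X] {α δ : ℝ}
    (hα₀ : 0 < α) (hα₁ : α < 1) {p q m : X}
    (h : dist p m ^ α + dist m q ^ α ≤ dist p q ^ α + δ) :
    dist p m ≤ (δ / (2 - 2 ^ α)) ^ α⁻¹ ∨ dist q m ≤ (δ / (2 - 2 ^ α)) ^ α⁻¹ := by
  have hgap : 0 < 2 - (2 : ℝ) ^ α := sub_pos.2 (two_rpow_lt_two hα₁)
  have hsub := add_rpow_le_rpow_add_rpow_sub_mul_min_rpow hα₀.le hα₁.le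
    (dist_nonneg (x := p) (y := m)) (dist_nonneg (x := m) (y := q))
  have htri : dist p q ^ α ≤ (dist p m + dist m q) ^ α :=
    rpow_le_rpow dist_nonneg (dist_triangle p m q) hα₀.le
  have hmin : min (dist p m) (dist m q) ^ α ≤ δ / (2 - 2 ^ α) := by
    rw [le_div_iff₀ hgap]
    linarith
  have hmin₀ : 0 ≤ min (dist p m) (dist m q) := le_min dist_nonneg dist_nonneg
  rw [dist_comm q m, ← min_le_iff,
    le_rpow_inv_iff_of_pos hmin₀ ((rpow_nonneg hmin₀ α).trans hmin) hα₀]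
  exact hmin

/-- Proposition 5.2(2): if X contains triples of points with all
pairwise distances arbitrarily large, then (X, dist^α) is not δ-tripodal for
any δ > 0. -/
theorem stmt_12 {X : Type*} [MetricSpace X] (α : ℝ) (hα0 : 0 < α) (hα1 : α < 1)
    (hbig : ∀ R : ℝ, 0 < R → ∃ x y z : X,
      R ≤ dist x y ∧ R ≤ dist y z ∧ R ≤ dist x z) :
    ∀ δ : ℝ, 0 < δ → ∃ x y z : X, ∀ m : X,
      ¬ (dist x m ^ α + dist m y ^ α ≤ dist x y ^ α + δ ∧
         dist y m ^ α + dist m z ^ α ≤ dist y z ^ α + δ ∧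
         dist x m ^ α + dist m z ^ α ≤ dist x z ^ α + δ) := by
  intro δ hδ
  set r := (δ / (2 - 2 ^ α)) ^ α⁻¹
  have hr : 0 ≤ r := rpow_nonneg (div_nonneg hδ.le (sub_pos.2 (two_rpow_lt_two hα1)).le) _
  obtain ⟨x, y, z, hxy, hyz, hxz⟩ := hbig (2 * r + 1) (by positivity)
  refine ⟨x, y, z, fun m ⟨hmxy, hmyz, hmxz⟩ => ?_⟩
  have far {p q : X} (hpq : 2 * r + 1 ≤ dist p q) (hp : dist p m ≤ r) (hq : dist q m ≤ r) :
      False := by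
    linarith [dist_triangle_right p q m]
  have near {p q : X} (h : dist p m ^ α + dist m q ^ α ≤ dist p q ^ α + δ) :
      dist p m ≤ r ∨ dist q m ≤ r :=
    dist_le_or_dist_le_of_snowflake_between hα0 hα1 h
  by_cases hx : dist x m ≤ r
  · rcases near hmyz with hy | hz
    exacts [far hxy hx hy, far hxz hx hz]
  · exact far hyz ((near hmxy).resolve_left hx) ((near hmxz).resolve_left hx)
end

section
/- Let α be a real number with 0 < α < 1. For every δ > 0, the hyperbolic plane (the upper half-plane with its hyperbolic metric dist) equipped with the snowflaked metric dist^α is not δ-tripodal: there exist points x, y, z in the upper half-plane such that no point m satisfies all three inequalities dist(x,m)^α + dist(m,y)^α ≤ dist(x,y)^α + δ, dist(y,m)^α + dist(m,z)^α ≤ dist(y,z)^α + δ, and dist(x,m)^α + dist(m,z)^α ≤ dist(x,z)^α + δ. -/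
open Real

/-- Submodularity of a concave function on `[0, ∞)`. -/
lemma concave_submodular {f : ℝ → ℝ} (hf : ConcaveOn ℝ (Set.Ici 0) f)
    {x y h : ℝ} (hx : 0 ≤ x) (hxy : x ≤ y) (hh : 0 ≤ h) :
    f x + f (y + h) ≤ f (x + h) + f y := by
  rcases eq_or_lt_of_le hh with rfl | hh
  · simp only [add_zero]; linarith
  have hD : 0 < y + h - x := by linarith
  set l := h / (y + h - x) with hl
  set m := (y - x) / (y + h - x) with hm
  have hl0 : 0 ≤ l := by positivity
  have hm0 : 0 ≤ m := by apply div_nonneg <;> linarith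
  have hlm : l + m = 1 := by rw [hl, hm]; field_simp; ring
  have hxmem : (x : ℝ) ∈ Set.Ici (0:ℝ) := hx
  have hymem : (y + h : ℝ) ∈ Set.Ici (0:ℝ) := by
    simp only [Set.mem_Ici]; linarith
  have h1 := hf.2 hxmem hymem hl0 hm0 hlm
  have h2 := hf.2 hxmem hymem hm0 hl0 (by linarith)
  have e1 : l • x + m • (y + h) = y := by
    simp only [smul_eq_mul, hl, hm]; field_simp; ring
  have e2 : m • x + l • (y + h) = x + h := by
    simp only [smul_eq_mul, hl, hm]; field_simp; ring
  rw [e1] at h1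
  rw [e2] at h2
  simp only [smul_eq_mul] at h1 h2
  clear_value l m
  have hexp : (l + m) * (f x + f (y + h)) =
      (l * f x + m * f (y + h)) + (m * f x + l * f (y + h)) := by ring
  rw [hlm, one_mul] at hexp
  linarith

/-- Key snowflake inequality: `(a+b)^α ≤ a^α + (2^α - 1) b^α` for `0 ≤ b ≤ a`. -/
lemma snowflake_key {α : ℝ} (hα0 : 0 < α) (hα1 : α < 1) {a b : ℝ}
    (hb : 0 ≤ b) (hba : b ≤ a) :
    (a + b) ^ α ≤ a ^ α + (2 ^ α - 1) * b ^ α := by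
  have hconc : ConcaveOn ℝ (Set.Ici 0) (fun t : ℝ => t ^ α) :=
    (Real.strictConcaveOn_rpow hα0 hα1).concaveOn
  have := concave_submodular hconc hb hba hb
  have h2b : (b + b) ^ α = 2 ^ α * b ^ α := by
    rw [show b + b = 2 * b by ring, Real.mul_rpow (by norm_num) hb]
  rw [h2b] at this
  linarith

/-- If `d1^α + d2^α ≤ D^α + δ` and `D ≤ d1 + d2`, then the smaller of `d1, d2`
is at most `(δ / (2 - 2^α))^(1/α)`. -/
lemma snowflake_near {α δ : ℝ} (hα0 : 0 < α) (hα1 : α < 1) (hδ : 0 < δ)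
    {d1 d2 D : ℝ} (h1 : 0 ≤ d1) (h2 : 0 ≤ d2) (hD : 0 ≤ D) (htri : D ≤ d1 + d2)
    (hcond : d1 ^ α + d2 ^ α ≤ D ^ α + δ) :
    min d1 d2 ≤ (δ / (2 - 2 ^ α)) ^ α⁻¹ := by
  have hc : (0:ℝ) < 2 - 2 ^ α := by
    have : (2:ℝ) ^ α < 2 ^ (1:ℝ) :=
      Real.rpow_lt_rpow_of_exponent_lt (by norm_num) hα1
    rw [Real.rpow_one] at this
    linarith
  have hq : 0 ≤ δ / (2 - 2 ^ α) := by positivity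
  have hmain : ∀ e1 e2 : ℝ, 0 ≤ e1 → e1 ≤ e2 → D ≤ e1 + e2 →
      e1 ^ α + e2 ^ α ≤ D ^ α + δ → e1 ≤ (δ / (2 - 2 ^ α)) ^ α⁻¹ := by
    intro e1 e2 he1 hee htr hcd
    have hk := snowflake_key hα0 hα1 he1 hee
    have hDe : D ^ α ≤ (e2 + e1) ^ α :=
      Real.rpow_le_rpow hD (by linarith) hα0.le
    have hbound : (2 - 2 ^ α) * e1 ^ α ≤ δ := by linarith
    have he1a : e1 ^ α ≤ δ / (2 - 2 ^ α) := by
      rw [le_div_iff₀ hc]; linarith [hbound]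
    by_contra hgt
    push_neg at hgt
    have : ((δ / (2 - 2 ^ α)) ^ α⁻¹) ^ α < e1 ^ α :=
      Real.rpow_lt_rpow (by positivity) hgt hα0
    rw [Real.rpow_inv_rpow hq hα0.ne'] at this
    linarith
  rcases le_total d1 d2 with h | h
  · rw [min_eq_left h]; exact hmain d1 d2 h1 h htri hcond
  · rw [min_eq_right h]
    exact hmain d2 d1 h2 h (by linarith) (by linarith)

/-- the snowflaked hyperbolic plane (dist^α, 0 < α < 1) is not
δ-tripodal for any δ > 0. -/
theorem stmt_13 (α : ℝ) (hα0 : 0 < α) (hα1 : α < 1) (δ : ℝ) (hδ : 0 < δ) :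
    ∃ x y z : UpperHalfPlane, ∀ m : UpperHalfPlane,
      ¬ (dist x m ^ α + dist m y ^ α ≤ dist x y ^ α + δ ∧
         dist y m ^ α + dist m z ^ α ≤ dist y z ^ α + δ ∧
         dist x m ^ α + dist m z ^ α ≤ dist x z ^ α + δ) := by
  set R : ℝ := (δ / (2 - 2 ^ α)) ^ α⁻¹ with hR
  have hc : (0:ℝ) < 2 - 2 ^ α := by
    have : (2:ℝ) ^ α < 2 ^ (1:ℝ) :=
      Real.rpow_lt_rpow_of_exponent_lt (by norm_num) hα1
    rw [Real.rpow_one] at this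
    linarith
  have hR0 : 0 ≤ R := Real.rpow_nonneg (by positivity) _
  set s : ℝ := 2 * R + 1 with hs
  have hs0 : 0 < s := by linarith
  refine ⟨⟨⟨0, Real.exp 0⟩, Real.exp_pos 0⟩, ⟨⟨0, Real.exp s⟩, Real.exp_pos s⟩,
    ⟨⟨0, Real.exp (2 * s)⟩, Real.exp_pos (2 * s)⟩, ?_⟩
  set x : UpperHalfPlane := ⟨⟨0, Real.exp 0⟩, Real.exp_pos 0⟩
  set y : UpperHalfPlane := ⟨⟨0, Real.exp s⟩, Real.exp_pos s⟩
  set z : UpperHalfPlane := ⟨⟨0, Real.exp (2 * s)⟩, Real.exp_pos (2 * s)⟩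
  have him_x : Real.log x.im = 0 := by
    show Real.log (Real.exp 0) = 0; rw [Real.log_exp]
  have him_y : Real.log y.im = s := by
    show Real.log (Real.exp s) = s; rw [Real.log_exp]
  have him_z : Real.log z.im = 2 * s := by
    show Real.log (Real.exp (2 * s)) = 2 * s; rw [Real.log_exp]
  have hxy : s ≤ dist x y := by
    have := UpperHalfPlane.dist_log_im_le x y
    rw [him_x, him_y, Real.dist_eq] at this
    calc s = |0 - s| := by rw [zero_sub, abs_neg, abs_of_nonneg hs0.le]
    _ ≤ dist x y := this
  have hyz : s ≤ dist y z := by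
    have := UpperHalfPlane.dist_log_im_le y z
    rw [him_y, him_z, Real.dist_eq] at this
    calc s = |s - 2 * s| := by
          rw [show s - 2 * s = -s by ring, abs_neg, abs_of_nonneg hs0.le]
    _ ≤ dist y z := this
  have hxz : 2 * s ≤ dist x z := by
    have := UpperHalfPlane.dist_log_im_le x z
    rw [him_x, him_z, Real.dist_eq] at this
    calc 2 * s = |0 - 2 * s| := by
          rw [zero_sub, abs_neg, abs_of_nonneg (by linarith : (0:ℝ) ≤ 2 * s)]
    _ ≤ dist x z := this
  rintro m ⟨c1, c2, c3⟩
  have A := snowflake_near hα0 hα1 hδ dist_nonneg dist_nonneg dist_nonneg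
    (dist_triangle x m y) c1
  have B := snowflake_near hα0 hα1 hδ dist_nonneg dist_nonneg dist_nonneg
    (dist_triangle y m z) c2
  have C := snowflake_near hα0 hα1 hδ dist_nonneg dist_nonneg dist_nonneg
    (dist_triangle x m z) c3
  rw [min_le_iff] at A B C
  have t1 : dist x y ≤ dist x m + dist m y := dist_triangle x m y
  have t2 : dist y z ≤ dist y m + dist m z := dist_triangle y m z
  have t3 : dist x z ≤ dist x m + dist m z := dist_triangle x m z
  have hmy : dist m y = dist y m := dist_comm m y
  rcases A with hA | hA <;> rcases C with hC | hC <;> rcases B with hB | hB <;>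
    linarith
end
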